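/- Let d ≥ 2, n ≥ 1, and f be integers with 1 ≤ f < d^n, and set r = ⌊log_d f⌋. Let a, b be d-ary strings of length n. Let S be a finite set of pairs (u,v) of d-ary strings of length n such that: (i) u ≠ a and v ≠ b for every (u,v) ∈ S; (ii) distinct elements of S have distinct second components; (iii) each string u occurs as first component of at most f elements of S; and (iv) every (u,v) ∈ S satisfies suf(u_{1..n−1}, a_{1..n−1}) + pre(v_{1..n−1}, b_{1..n−1}) ≥ n. Then |S| ≤ f·( d^{⌈(n−r)/2⌉−1} − 1 ) + d^{n−⌈(n−r)/2⌉} − 1. -/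
import Mathlib


/-- Length of the longest common prefix of the `(n-1)`-prefixes `s₁⋯s_{n-1}` and
`s'₁⋯s'_{n-1}` of two `d`-ary strings of length `n`: the largest `p ≤ n-1` such
that `s i = s' i` for all (0-indexed) `i < p`. -/
def strPre (d n : ℕ) (s s' : Fin n → Fin d) : ℕ :=
  ((Finset.range n).filter (fun p => ∀ i : Fin n, (i : ℕ) < p → s i = s' i)).sup id

/-- Length of the longest common suffix of the `(n-1)`-prefixes `s₁⋯s_{n-1}` and
`s'₁⋯s'_{n-1}` of two `d`-ary strings of length `n`: the largest `q ≤ n-1` such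
that `s i = s' i` for all (0-indexed) `i` with `n-1-q ≤ i < n-1`. -/
def strSuf (d n : ℕ) (s s' : Fin n → Fin d) : ℕ :=
  ((Finset.range n).filter
    (fun q => ∀ i : Fin n, n - 1 - q ≤ (i : ℕ) → (i : ℕ) < n - 1 → s i = s' i)).sup id

lemma strPre_le (d n : ℕ) (hn : 1 ≤ n) (s s' : Fin n → Fin d) : strPre d n s s' ≤ n - 1 := by
  apply Finset.sup_le
  intro p hp
  simp only [Finset.mem_filter, Finset.mem_range] at hp
  simp only [id]
  omega

lemma strSuf_le (d n : ℕ) (hn : 1 ≤ n) (s s' : Fin n → Fin d) : strSuf d n s s' ≤ n - 1 := by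
  apply Finset.sup_le
  intro p hp
  simp only [Finset.mem_filter, Finset.mem_range] at hp
  simp only [id]
  omega

lemma strPre_spec (d n k : ℕ) (hk : 1 ≤ k) (s s' : Fin n → Fin d)
    (h : k ≤ strPre d n s s') : ∀ i : Fin n, (i : ℕ) < k → s i = s' i := by
  classical
  set t := ((Finset.range n).filter (fun p => ∀ i : Fin n, (i : ℕ) < p → s i = s' i)) with ht
  have hne : t.Nonempty := by
    by_contra hcon
    rw [Finset.not_nonempty_iff_eq_empty] at hcon
    have : strPre d n s s' = 0 := by
      unfold strPre; rw [← ht, hcon]; simp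
    omega
  obtain ⟨p, hp, hps⟩ := Finset.exists_mem_eq_sup t hne id
  have hsup : strPre d n s s' = p := hps
  rw [ht, Finset.mem_filter] at hp
  intro i hi
  exact hp.2 i (by omega)

lemma strSuf_spec (d n q₀ : ℕ) (hq : 1 ≤ q₀) (s s' : Fin n → Fin d)
    (h : q₀ ≤ strSuf d n s s') :
    ∀ i : Fin n, n - 1 - q₀ ≤ (i : ℕ) → (i : ℕ) < n - 1 → s i = s' i := by
  classical
  set t := ((Finset.range n).filter
    (fun q => ∀ i : Fin n, n - 1 - q ≤ (i : ℕ) → (i : ℕ) < n - 1 → s i = s' i)) with ht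
  have hne : t.Nonempty := by
    by_contra hcon
    rw [Finset.not_nonempty_iff_eq_empty] at hcon
    have : strSuf d n s s' = 0 := by
      unfold strSuf; rw [← ht, hcon]; simp
    omega
  obtain ⟨p, hp, hps⟩ := Finset.exists_mem_eq_sup t hne id
  have hsup : strSuf d n s s' = p := hps
  rw [ht, Finset.mem_filter] at hp
  intro i hi1 hi2
  exact hp.2 i (by omega) hi2

/-- Strings agreeing with `a` on all positions satisfying `P` number at most
`d` to the number of positions not satisfying `P`. -/
lemma card_fix {d n : ℕ} (a : Fin n → Fin d) (P : Fin n → Prop) [DecidablePred P] :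
    (Finset.univ.filter (fun u : Fin n → Fin d => ∀ i, P i → u i = a i)).card
      ≤ d ^ (Finset.univ.filter (fun i : Fin n => ¬ P i)).card := by
  classical
  set I : Finset (Fin n) := Finset.univ.filter (fun i => ¬ P i) with hI
  have key : (Finset.univ.filter (fun u : Fin n → Fin d => ∀ i, P i → u i = a i)).card
      ≤ (Finset.univ : Finset (↥I → Fin d)).card := by
    apply Finset.card_le_card_of_injOn (fun u (i : ↥I) => u i.1)
    · intro _ _; exact Finset.mem_univ _
    · intro u hu w hw h
      simp only [Finset.coe_filter, Set.mem_setOf_eq, Finset.mem_univ, true_and] at hu hw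
      funext i
      by_cases hP : P i
      · rw [hu i hP, hw i hP]
      · have hmem : i ∈ I := by simp [hI, hP]
        exact congrFun h ⟨i, hmem⟩
  rw [Finset.card_univ, Fintype.card_fun, Fintype.card_fin, Fintype.card_coe] at key
  exact key

lemma val_filter (n : ℕ) (P : ℕ → Prop) [DecidablePred P] :
    (Finset.univ.filter (fun i : Fin n => P i.val)).card = ((Finset.range n).filter P).card := by
  refine Finset.card_bij (fun (i : Fin n) (_ : i ∈ Finset.univ.filter (fun i : Fin n => P i.val)) => (i : ℕ)) ?_ ?_ ?_
  · intro i hi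
    simp only [Finset.mem_filter, Finset.mem_univ, true_and] at hi
    simp only [Finset.mem_filter, Finset.mem_range]
    exact ⟨i.isLt, hi⟩
  · intro i _ j _ h; exact Fin.val_injective h
  · intro x hx
    simp only [Finset.mem_filter, Finset.mem_range] at hx
    exact ⟨⟨x, hx.1⟩, by simp [hx.2], rfl⟩

/-- f-cast SNB bound (Theorem 4 in Wang 2007), with `r = ⌊log_d f⌋`: a set `S`
of link-blocking pairs with distinct second components in which each string
occurs as first component at most `f` times has cardinality at most
`f (d^{⌈(n-r)/2⌉-1} - 1) + d^{n-⌈(n-r)/2⌉} - 1`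
(here `⌈(n-r)/2⌉ = (n - r + 1)/2` in natural-number arithmetic). -/
theorem stmt_13 (d n f : ℕ) (hd : 2 ≤ d) (hn : 1 ≤ n)
    (hf1 : 1 ≤ f) (hf2 : f < d ^ n) (a b : Fin n → Fin d)
    (S : Finset ((Fin n → Fin d) × (Fin n → Fin d)))
    (h1 : ∀ p ∈ S, p.1 ≠ a ∧ p.2 ≠ b)
    (h2 : ∀ p ∈ S, ∀ q ∈ S, p ≠ q → p.2 ≠ q.2)
    (h3 : ∀ u : Fin n → Fin d, (S.filter (fun p => p.1 = u)).card ≤ f)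
    (h4 : ∀ p ∈ S, n ≤ strSuf d n p.1 a + strPre d n p.2 b) :
    S.card ≤ f * (d ^ ((n - Nat.log d f + 1) / 2 - 1) - 1)
        + d ^ (n - (n - Nat.log d f + 1) / 2) - 1 := by
  classical
  set r := Nat.log d f with hrdef
  set k := (n - r + 1) / 2 with hkdef
  have hr : r < n := Nat.log_lt_of_lt_pow (by omega) hf2
  have hk1 : 1 ≤ k := by omega
  have hkn : k ≤ n := by omega
  -- split S
  set S₁ := S.filter (fun p => k ≤ strPre d n p.2 b) with hS₁
  set S₂ := S.filter (fun p => ¬ k ≤ strPre d n p.2 b) with hS₂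
  have hsplit : S₁.card + S₂.card = S.card :=
    Finset.card_filter_add_card_filter_not _
  -- Bound S₁
  set B := Finset.univ.filter
    (fun v : Fin n → Fin d => ∀ i : Fin n, (i : ℕ) < k → v i = b i) with hB
  have hbB : b ∈ B := by simp [hB]
  have hBcard : B.card ≤ d ^ (n - k) := by
    have hc : (Finset.univ.filter (fun i : Fin n => ¬ (i : ℕ) < k)).card = n - k := by
      rw [val_filter n (fun x => ¬ x < k)]
      have : (Finset.range n).filter (fun x => ¬ x < k) = Finset.Ico k n := by
        ext x
        simp only [Finset.mem_filter, Finset.mem_range, Finset.mem_Ico]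
        omega
      rw [this, Nat.card_Ico]
    have h := card_fix (d := d) (n := n) b (fun i : Fin n => (i : ℕ) < k)
    rw [hc] at h
    exact h
  have hS₁card : S₁.card ≤ d ^ (n - k) - 1 := by
    have hmap : ∀ p ∈ S₁, p.2 ∈ B.erase b := by
      intro p hp
      rw [hS₁, Finset.mem_filter] at hp
      refine Finset.mem_erase.2 ⟨(h1 p hp.1).2, ?_⟩
      simp only [hB, Finset.mem_filter, Finset.mem_univ, true_and]
      exact strPre_spec d n k hk1 p.2 b hp.2
    have hinj : Set.InjOn Prod.snd (S₁ : Set ((Fin n → Fin d) × (Fin n → Fin d))) := by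
      intro p hp q hq hpq
      by_contra hne
      exact h2 p (Finset.mem_of_mem_filter _ hp) q (Finset.mem_of_mem_filter _ hq) hne hpq
    calc S₁.card ≤ (B.erase b).card := Finset.card_le_card_of_injOn Prod.snd hmap hinj
      _ = B.card - 1 := Finset.card_erase_of_mem hbB
      _ ≤ d ^ (n - k) - 1 := by omega
  -- Bound S₂
  have hS₂card : S₂.card ≤ f * (d ^ (k - 1) - 1) := by
    rcases eq_or_lt_of_le hk1 with hk1' | hk2
    · -- k = 1 : S₂ is empty
      have : S₂ = ∅ := by
        rw [Finset.eq_empty_iff_forall_notMem]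
        intro p hp
        rw [hS₂, Finset.mem_filter] at hp
        have h4' := h4 p hp.1
        have hsuf := strSuf_le d n hn p.1 a
        have := hp.2
        omega
      simp [this]
    · -- k ≥ 2
      have hn2 : 2 * k ≤ n + 1 := by omega
      set A := Finset.univ.filter
        (fun u : Fin n → Fin d =>
          ∀ i : Fin n, (k - 2 ≤ (i : ℕ) ∧ (i : ℕ) < n - 1) → u i = a i) with hA
      have haA : a ∈ A := by simp [hA]
      have hAcard : A.card ≤ d ^ (k - 1) := by
        have hc : (Finset.univ.filter
            (fun i : Fin n => ¬ (k - 2 ≤ (i : ℕ) ∧ (i : ℕ) < n - 1))).card = k - 1 := by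
          rw [val_filter n (fun x => ¬ (k - 2 ≤ x ∧ x < n - 1))]
          have : (Finset.range n).filter (fun x => ¬ (k - 2 ≤ x ∧ x < n - 1))
              = Finset.range (k - 2) ∪ {n - 1} := by
            ext x
            simp only [Finset.mem_filter, Finset.mem_range, Finset.mem_union,
              Finset.mem_singleton]
            omega
          have hdisj : Disjoint (Finset.range (k - 2)) ({n - 1} : Finset ℕ) := by
            simp only [Finset.disjoint_singleton_right, Finset.mem_range]
            omega
          rw [this, Finset.card_union_of_disjoint hdisj, Finset.card_range,
            Finset.card_singleton]
          omega
        have h := card_fix (d := d) (n := n) a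
          (fun i : Fin n => k - 2 ≤ (i : ℕ) ∧ (i : ℕ) < n - 1)
        rw [hc] at h
        exact h
      have hmap : ∀ p ∈ S₂, p.1 ∈ A.erase a := by
        intro p hp
        rw [hS₂, Finset.mem_filter] at hp
        refine Finset.mem_erase.2 ⟨(h1 p hp.1).1, ?_⟩
        simp only [hA, Finset.mem_filter, Finset.mem_univ, true_and]
        have h4' := h4 p hp.1
        have hpre := strPre_le d n hn p.2 b
        have hsufge : n + 1 - k ≤ strSuf d n p.1 a := by
          have := hp.2
          omega
        intro i hi
        have := strSuf_spec d n (n + 1 - k) (by omega) p.1 a hsufge i (by omega) hi.2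
        exact this
      have hsum : S₂.card = ∑ u ∈ A.erase a, (S₂.filter (fun p => p.1 = u)).card :=
        Finset.card_eq_sum_card_fiberwise hmap
      have hbound : ∀ u ∈ A.erase a, (S₂.filter (fun p => p.1 = u)).card ≤ f := by
        intro u _
        calc (S₂.filter (fun p => p.1 = u)).card
            ≤ (S.filter (fun p => p.1 = u)).card := by
              apply Finset.card_le_card
              apply Finset.filter_subset_filter
              exact Finset.filter_subset _ _
          _ ≤ f := h3 u
      calc S₂.card = ∑ u ∈ A.erase a, (S₂.filter (fun p => p.1 = u)).card := hsum
        _ ≤ ∑ _u ∈ A.erase a, f := Finset.sum_le_sum hbound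
        _ = (A.erase a).card * f := by rw [Finset.sum_const, smul_eq_mul]
        _ ≤ (d ^ (k - 1) - 1) * f := by
            have := Finset.card_erase_of_mem haA
            have : (A.erase a).card ≤ d ^ (k - 1) - 1 := by omega
            exact Nat.mul_le_mul_right f this
        _ = f * (d ^ (k - 1) - 1) := Nat.mul_comm _ _
  have hpos : 1 ≤ d ^ (n - k) := Nat.one_le_pow _ _ (by omega)
  omega
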